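/- arXiv:1406.6090 — 2 statements merged into one kernel-verified Lean document; each statement's English description precedes it below -/
import Mathlib

section
/- Let I ⊆ ℝ be an open interval, U : I → ℝ twice continuously differentiable with U(v) > 0 and U′(v) > 0 for all v ∈ I, and suppose there is a constant κ ∈ ℝ with κ ≠ 0 and κ ≠ −1 such that −U′(v)²/(U″(v)U(v)) = κ for all v ∈ I. Then there exist constants c ≠ 0, a, b with b ≠ 0 such that a + b·v > 0 on I and U(v) = c·(a + b·v)^{κ/(κ+1)} for all v ∈ I. -/
/-! With `p = (κ + 1) / κ` the ratio condition reads `(p - 1) U'² + U U'' = 0`, and the left side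
is, up to the factor `p U^(p-2)`, the second derivative of `U^p`. So `U^p` is affine on the
interval, with slope `p U^(p-1) U' ≠ 0`, and `U = (U^p)^(1/p)` where `1/p = κ / (κ + 1)`. -/

theorem hasDerivAt_const_mul_rpow_sub_one_mul {u u' : ℝ → ℝ} {u'' x : ℝ} (p : ℝ)
    (hu : HasDerivAt u (u' x) x) (hu' : HasDerivAt u' u'' x) (hx : 0 < u x) :
    HasDerivAt (fun y => p * u y ^ (p - 1) * u' y)
      (p * u x ^ (p - 2) * ((p - 1) * u' x ^ 2 + u x * u'')) x := by
  refine (((hu.rpow_const (p := p - 1) (Or.inl hx.ne')).const_mul p).mul hu').congr_deriv ?_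
  rw [show p - 1 = p - 2 + 1 by ring, Real.rpow_add_one hx.ne',
    show p - 2 + 1 - 1 = p - 2 by ring]
  ring

theorem IsOpen.exists_eq_add_mul_of_hasDerivAt_of_hasDerivAt_zero {s : Set ℝ} (hs : IsOpen s)
    (hs' : IsPreconnected s) {f f' : ℝ → ℝ} (hf : ∀ x ∈ s, HasDerivAt f (f' x) x)
    (hf' : ∀ x ∈ s, HasDerivAt f' 0 x) {x₀ : ℝ} (hx₀ : x₀ ∈ s) :
    ∃ a, ∀ x ∈ s, f x = a + f' x₀ * x := by
  have hf'_const : ∀ x ∈ s, f' x = f' x₀ := fun x hx =>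
    hs.is_const_of_deriv_eq_zero hs'
      (fun y hy => (hf' y hy).differentiableAt.differentiableWithinAt)
      (fun y hy => (hf' y hy).deriv) hx hx₀
  have hg : ∀ x ∈ s, HasDerivAt (fun y => f y - f' x₀ * y) 0 x := fun x hx =>
    ((hf x hx).sub ((hasDerivAt_id x).const_mul (f' x₀))).congr_deriv (by simp [hf'_const x hx])
  refine ⟨f x₀ - f' x₀ * x₀, fun x hx => ?_⟩
  have := hs.is_const_of_deriv_eq_zero hs'
    (fun y hy => (hg y hy).differentiableAt.differentiableWithinAt)
    (fun y hy => (hg y hy).deriv) hx hx₀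
  linarith

theorem IsOpen.exists_rpow_eq_add_mul {s : Set ℝ} (hs : IsOpen s) (hs' : IsPreconnected s)
    {u u' u'' : ℝ → ℝ} (hu : ∀ x ∈ s, HasDerivAt u (u' x) x)
    (hu' : ∀ x ∈ s, HasDerivAt u' (u'' x) x) (hpos : ∀ x ∈ s, 0 < u x) (p : ℝ)
    (hode : ∀ x ∈ s, (p - 1) * u' x ^ 2 + u x * u'' x = 0) {x₀ : ℝ} (hx₀ : x₀ ∈ s) :
    ∃ a, ∀ x ∈ s, u x ^ p = a + p * u x₀ ^ (p - 1) * u' x₀ * x :=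
  hs.exists_eq_add_mul_of_hasDerivAt_of_hasDerivAt_zero hs'
    (f' := fun x => p * u x ^ (p - 1) * u' x)
    (fun x hx => ((hu x hx).rpow_const (Or.inl (hpos x hx).ne')).congr_deriv (by ring))
    (fun x hx => (hasDerivAt_const_mul_rpow_sub_one_mul p (hu x hx) (hu' x hx)
      (hpos x hx)).congr_deriv (by rw [hode x hx, mul_zero]))
    hx₀

theorem div_sub_one_mul_sq_add_mul_eq_zero_of_neg_sq_div_eq {d e u κ : ℝ} (hκ : κ ≠ 0)
    (h : -d ^ 2 / (e * u) = κ) : ((κ + 1) / κ - 1) * d ^ 2 + u * e = 0 := by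
  have heu : e * u ≠ 0 := fun h0 => hκ (by rw [← h, h0, div_zero])
  rw [div_eq_iff heu] at h
  field_simp
  linear_combination -h

theorem hara_characterization_general (I : Set ℝ) (hIopen : IsOpen I) (hIconn : I.OrdConnected)
    (U : ℝ → ℝ) (hU : ContDiffOn ℝ 2 U I)
    (hUpos : ∀ v ∈ I, 0 < U v)
    (κ : ℝ) (hκ0 : κ ≠ 0) (hκ1 : κ ≠ -1)
    (hratio : ∀ v ∈ I, -(deriv U v) ^ 2 / (deriv (deriv U) v * U v) = κ) :
    ∃ c a b : ℝ, c ≠ 0 ∧ b ≠ 0 ∧ (∀ v ∈ I, 0 < a + b * v) ∧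
      ∀ v ∈ I, U v = c * (a + b * v) ^ (κ / (κ + 1)) := by
  rcases I.eq_empty_or_nonempty with rfl | ⟨v₀, hv₀⟩
  · exact ⟨1, 1, 1, one_ne_zero, one_ne_zero, by simp, by simp⟩
  have hU' : ∀ v ∈ I, HasDerivAt U (deriv U v) v := fun v hv =>
    ((hU.differentiableOn (by norm_num)).differentiableAt (hIopen.mem_nhds hv)).hasDerivAt
  have hU'' : ∀ v ∈ I, HasDerivAt (deriv U) (deriv (deriv U) v) v := fun v hv =>
    (((hU.deriv_of_isOpen hIopen (m := 1) (by norm_num)).differentiableOn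
      (by norm_num)).differentiableAt (hIopen.mem_nhds hv)).hasDerivAt
  set p := (κ + 1) / κ
  have hp : p ≠ 0 := div_ne_zero (fun h => hκ1 (by linarith)) hκ0
  obtain ⟨a, ha⟩ := hIopen.exists_rpow_eq_add_mul hIconn.isPreconnected hU' hU'' hUpos p
    (fun v hv => div_sub_one_mul_sq_add_mul_eq_zero_of_neg_sq_div_eq hκ0 (hratio v hv)) hv₀
  have hU'v₀ : deriv U v₀ ≠ 0 := fun h0 => hκ0 (by simpa [h0] using (hratio v₀ hv₀).symm)
  refine ⟨1, a, p * U v₀ ^ (p - 1) * deriv U v₀, one_ne_zero, ?_, fun v hv => ?_,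
    fun v hv => ?_⟩
  · exact mul_ne_zero (mul_ne_zero hp (Real.rpow_pos_of_pos (hUpos v₀ hv₀) _).ne') hU'v₀
  · exact ha v hv ▸ Real.rpow_pos_of_pos (hUpos v hv) p
  · rw [← ha v hv, one_mul, ← inv_div, Real.rpow_rpow_inv (hUpos v hv).le hp]

/-- If `U` is twice continuously differentiable on an open interval `I`,
positive and strictly increasing there, and the ratio `−U′(v)²/(U″(v)U(v))` is a constant
`κ ∉ {0, −1}` on `I`, then `U(v) = c·(a + b·v)^{κ/(κ+1)}` on `I` for some constants
`c ≠ 0`, `b ≠ 0`, `a` with `a + b·v > 0` on `I`. -/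
theorem hara_characterization (I : Set ℝ) (hIopen : IsOpen I) (hIconn : I.OrdConnected)
    (U : ℝ → ℝ) (hU : ContDiffOn ℝ 2 U I)
    (hUpos : ∀ v ∈ I, 0 < U v) (hU'pos : ∀ v ∈ I, 0 < deriv U v)
    (κ : ℝ) (hκ0 : κ ≠ 0) (hκ1 : κ ≠ -1)
    (hratio : ∀ v ∈ I, -(deriv U v) ^ 2 / (deriv (deriv U) v * U v) = κ) :
    ∃ c a b : ℝ, c ≠ 0 ∧ b ≠ 0 ∧ (∀ v ∈ I, 0 < a + b * v) ∧
      ∀ v ∈ I, U v = c * (a + b * v) ^ (κ / (κ + 1)) :=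
  hara_characterization_general I hIopen hIconn U hU hUpos κ hκ0 hκ1 hratio
end

section
/- Let 𝒰 ⊆ ℝⁿ be open, a : 𝒰 → ℝⁿ continuous, C : 𝒰 → Mat_n(ℝ) continuous with C(x) symmetric positive definite, and let U : ℝ → ℝ be twice differentiable with U(w) ≠ 0, U′(w) ≠ 0, U″(w) ≠ 0 and −U′(w)²/(U″(w)U(w)) = κ for all w, for a constant κ ∈ ℝ. Let Γ : [0,T] × 𝒰 → ℝ_{>0} be C¹ in t and C² in x and satisfy ∂_tΓ + aᵀ∇Γ + (1/2)tr(C∇²Γ) + (κ/2)·(∇log Γ + C⁻¹a)ᵀ C (∇log Γ + C⁻¹a)·Γ = 0 on [0,T] × 𝒰. Then J(t,x,w) := Γ(t,x)·U(w) satisfies ∂_tJ + aᵀ∇_xJ + (1/2)tr(C∇²_xJ) − (1/(2∂²_wJ))·(∇²_{xw}J + C⁻¹a·∂_wJ)ᵀ C (∇²_{xw}J + C⁻¹a·∂_wJ) = 0 on [0,T] × 𝒰 × ℝ. -/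
open Set Matrix

/-- The partial derivative `∂f/∂xⁱ` of a scalar function of `n` real variables. -/
noncomputable def pd {n : ℕ} (i : Fin n) (f : (Fin n → ℝ) → ℝ) (x : Fin n → ℝ) : ℝ :=
  fderiv ℝ f x (Pi.single i 1)

/-!
With `J = Γ·U`, every `t`- and `x`-derivative of `J` is `U(w)` times that of `Γ`, while
`∂_wJ = ΓU'`, `∂²_wJ = ΓU''` and `∇²_{xw}J = U'∇Γ`. Since `∇log Γ + C⁻¹a = Γ⁻¹(∇Γ + ΓC⁻¹a)`,
both quadratic terms are multiples of `Q = (∇Γ + ΓC⁻¹a)ᵀC(∇Γ + ΓC⁻¹a)`, and the relation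
`U'² = -κU''U` turns the HJB expression for `J` into `U(w)` times the equation for `Γ`.
-/

section PartialDerivatives

variable {n : ℕ}

lemma pd_mul_const (i : Fin n) (f : (Fin n → ℝ) → ℝ) (c : ℝ) :
    pd i (fun y => f y * c) = fun x => pd i f x * c := by
  have hf : (fun y => f y * c) = c • f := funext fun y => mul_comm (f y) c
  funext x
  rw [pd, pd, hf, fderiv_const_smul_field]
  exact mul_comm _ _

lemma pd_grad_mul_const (f : (Fin n → ℝ) → ℝ) (c : ℝ) (x : Fin n → ℝ) :
    (fun i => pd i (fun y => f y * c) x) = c • fun i => pd i f x := by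
  funext i
  simp only [pd_mul_const, Pi.smul_apply, smul_eq_mul, mul_comm c]

lemma pd_hessian_mul_const (f : (Fin n → ℝ) → ℝ) (c : ℝ) (x : Fin n → ℝ) :
    (Matrix.of fun i j => pd i (fun y => pd j (fun z => f z * c) y) x)
      = c • Matrix.of fun i j => pd i (fun y => pd j f y) x := by
  ext i j
  simp only [pd_mul_const, Matrix.of_apply, Matrix.smul_apply, smul_eq_mul, mul_comm c]

lemma pd_grad_log {f : (Fin n → ℝ) → ℝ} {x : Fin n → ℝ} (hf : DifferentiableAt ℝ f x)
    (hfx : f x ≠ 0) :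
    (fun i => pd i (fun y => Real.log (f y)) x) = (f x)⁻¹ • fun i => pd i f x := by
  funext i
  change fderiv ℝ (Real.log ∘ f) x _ = _
  rw [((Real.hasDerivAt_log hfx).comp_hasFDerivAt x hf.hasFDerivAt).fderiv]
  simp [pd]

end PartialDerivatives

lemma hjb_ansatz_factor {P A Tr Q G U U' U'' κ : ℝ} (hG : G ≠ 0) (hU : U ≠ 0) (hU'' : U'' ≠ 0)
    (hκ : -U' ^ 2 / (U'' * U) = κ) :
    P * U + U * A + 1 / 2 * (U * Tr) - 1 / (2 * (G * U'')) * (U' ^ 2 * Q)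
      = U * (P + A + 1 / 2 * Tr + κ / 2 * (G⁻¹ ^ 2 * Q) * G) := by
  subst hκ
  field_simp
  ring

lemma smul_dotProduct_mulVec_smul {m R : Type*} [Fintype m] [CommSemiring R]
    (M : Matrix m m R) (c : R) (v : m → R) :
    (c • v) ⬝ᵥ M *ᵥ (c • v) = c ^ 2 * (v ⬝ᵥ M *ᵥ v) := by
  rw [mulVec_smul, dotProduct_smul, smul_dotProduct, smul_eq_mul, smul_eq_mul, ← mul_assoc, sq]

theorem ansatz_reduces_hjb_general {n : ℕ}
    (Uo : Set (Fin n → ℝ)) (hUo : IsOpen Uo) (T : ℝ)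
    (a : (Fin n → ℝ) → Fin n → ℝ)
    (C : (Fin n → ℝ) → Matrix (Fin n) (Fin n) ℝ)
    (κ : ℝ) (Util : ℝ → ℝ)
    (hUne : ∀ w, Util w ≠ 0)
    (hU''ne : ∀ w, deriv (deriv Util) w ≠ 0)
    (hκ : ∀ w, -(deriv Util w) ^ 2 / (deriv (deriv Util) w * Util w) = κ)
    (Γ : ℝ → (Fin n → ℝ) → ℝ)
    (hΓpos : ∀ t ∈ Icc (0 : ℝ) T, ∀ x ∈ Uo, 0 < Γ t x)
    (hΓx : ∀ t ∈ Icc (0 : ℝ) T, ContDiffOn ℝ 2 (Γ t) Uo)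
    (hPDE : ∀ t ∈ Icc (0 : ℝ) T, ∀ x ∈ Uo,
      deriv (fun τ => Γ τ x) t
        + a x ⬝ᵥ (fun i => pd i (Γ t) x)
        + 1 / 2 * Matrix.trace (C x * Matrix.of fun i j => pd i (fun x' => pd j (Γ t) x') x)
        + κ / 2 *
            (((fun i => pd i (fun x' => Real.log (Γ t x')) x) + (C x)⁻¹.mulVec (a x)) ⬝ᵥ
              (C x).mulVec
                ((fun i => pd i (fun x' => Real.log (Γ t x')) x) + (C x)⁻¹.mulVec (a x))) *
          Γ t x = 0)
    (J : ℝ → (Fin n → ℝ) → ℝ → ℝ) (hJ : J = fun t x w => Γ t x * Util w) :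
    ∀ t ∈ Icc (0 : ℝ) T, ∀ x ∈ Uo, ∀ w : ℝ,
      deriv (fun τ => J τ x w) t
        + a x ⬝ᵥ (fun i => pd i (fun x' => J t x' w) x)
        + 1 / 2 *
            Matrix.trace (C x * Matrix.of fun i j => pd i (fun x' => pd j (fun x'' => J t x'' w) x') x)
        - 1 / (2 * deriv (deriv (fun w' => J t x w')) w) *
            (((fun i => pd i (fun x' => deriv (fun w' => J t x' w') w) x)
                + deriv (fun w' => J t x w') w • (C x)⁻¹.mulVec (a x)) ⬝ᵥ
              (C x).mulVec
                ((fun i => pd i (fun x' => deriv (fun w' => J t x' w') w) x)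
                  + deriv (fun w' => J t x w') w • (C x)⁻¹.mulVec (a x))) = 0 := by
  subst hJ
  intro t ht x hx w
  have hG : Γ t x ≠ 0 := (hΓpos t ht x hx).ne'
  have hΓdiff : DifferentiableAt ℝ (Γ t) x :=
    ((hΓx t ht).differentiableOn (by norm_num)).differentiableAt (hUo.mem_nhds hx)
  have hP := hPDE t ht x hx
  rw [pd_grad_log hΓdiff hG] at hP
  simp only [deriv_mul_const_field, deriv_const_mul_field', deriv_const_mul_field,
    pd_grad_mul_const, pd_hessian_mul_const]
  set g : Fin n → ℝ := fun i => pd i (Γ t) x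
  set b := (C x)⁻¹ *ᵥ a x
  have hΓ_vec : (Γ t x)⁻¹ • g + b = (Γ t x)⁻¹ • (g + Γ t x • b) := by
    rw [smul_add, smul_smul, inv_mul_cancel₀ hG, one_smul]
  have hJ_vec : deriv Util w • g + (Γ t x * deriv Util w) • b
      = deriv Util w • (g + Γ t x • b) := by
    rw [smul_add, smul_smul, mul_comm]
  rw [hΓ_vec, smul_dotProduct_mulVec_smul] at hP
  rw [hJ_vec, smul_dotProduct_mulVec_smul, dotProduct_smul, Matrix.mul_smul, trace_smul,
    smul_eq_mul, smul_eq_mul, hjb_ansatz_factor hG (hUne w) (hU''ne w) (hκ w), hP, mul_zero]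

/-- If `Γ > 0` solves
`∂ₜΓ + aᵀ∇Γ + ½tr(C∇²Γ) + (κ/2)(∇log Γ + C⁻¹a)ᵀC(∇log Γ + C⁻¹a)·Γ = 0` on `[0,T] × 𝒰`,
where `κ = −U′²/(U″U)` is the constant ratio of the HARA utility `U`, then
`J(t,x,w) = Γ(t,x)·U(w)` solves the reduced HJB equation
`∂ₜJ + aᵀ∇ₓJ + ½tr(C∇²ₓJ) − (1/(2∂²_wJ))·(∇²_{xw}J + C⁻¹a·∂_wJ)ᵀC(∇²_{xw}J + C⁻¹a·∂_wJ) = 0`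
on `[0,T] × 𝒰 × ℝ`. -/
theorem ansatz_reduces_hjb {n : ℕ}
    (Uo : Set (Fin n → ℝ)) (hUo : IsOpen Uo) (T : ℝ)
    (a : (Fin n → ℝ) → Fin n → ℝ) (ha : ContinuousOn a Uo)
    (C : (Fin n → ℝ) → Matrix (Fin n) (Fin n) ℝ)
    (hCcont : ∀ i j, ContinuousOn (fun x => C x i j) Uo)
    (hCpos : ∀ x ∈ Uo, (C x).PosDef)
    (κ : ℝ) (Util : ℝ → ℝ)
    (hU1 : Differentiable ℝ Util) (hU2 : Differentiable ℝ (deriv Util))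
    (hUne : ∀ w, Util w ≠ 0) (hU'ne : ∀ w, deriv Util w ≠ 0)
    (hU''ne : ∀ w, deriv (deriv Util) w ≠ 0)
    (hκ : ∀ w, -(deriv Util w) ^ 2 / (deriv (deriv Util) w * Util w) = κ)
    (Γ : ℝ → (Fin n → ℝ) → ℝ)
    (hΓpos : ∀ t ∈ Icc (0 : ℝ) T, ∀ x ∈ Uo, 0 < Γ t x)
    (hΓt : ∀ x ∈ Uo, ∀ t ∈ Icc (0 : ℝ) T, DifferentiableAt ℝ (fun τ => Γ τ x) t)
    (hΓx : ∀ t ∈ Icc (0 : ℝ) T, ContDiffOn ℝ 2 (Γ t) Uo)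
    (hPDE : ∀ t ∈ Icc (0 : ℝ) T, ∀ x ∈ Uo,
      deriv (fun τ => Γ τ x) t
        + a x ⬝ᵥ (fun i => pd i (Γ t) x)
        + 1 / 2 * Matrix.trace (C x * Matrix.of fun i j => pd i (fun x' => pd j (Γ t) x') x)
        + κ / 2 *
            (((fun i => pd i (fun x' => Real.log (Γ t x')) x) + (C x)⁻¹.mulVec (a x)) ⬝ᵥ
              (C x).mulVec
                ((fun i => pd i (fun x' => Real.log (Γ t x')) x) + (C x)⁻¹.mulVec (a x))) *
          Γ t x = 0)
    (J : ℝ → (Fin n → ℝ) → ℝ → ℝ) (hJ : J = fun t x w => Γ t x * Util w) :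
    ∀ t ∈ Icc (0 : ℝ) T, ∀ x ∈ Uo, ∀ w : ℝ,
      deriv (fun τ => J τ x w) t
        + a x ⬝ᵥ (fun i => pd i (fun x' => J t x' w) x)
        + 1 / 2 *
            Matrix.trace (C x * Matrix.of fun i j => pd i (fun x' => pd j (fun x'' => J t x'' w) x') x)
        - 1 / (2 * deriv (deriv (fun w' => J t x w')) w) *
            (((fun i => pd i (fun x' => deriv (fun w' => J t x' w') w) x)
                + deriv (fun w' => J t x w') w • (C x)⁻¹.mulVec (a x)) ⬝ᵥ
              (C x).mulVec
                ((fun i => pd i (fun x' => deriv (fun w' => J t x' w') w) x)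
                  + deriv (fun w' => J t x w') w • (C x)⁻¹.mulVec (a x))) = 0 :=
  ansatz_reduces_hjb_general Uo hUo T a C κ Util hUne hU''ne hκ Γ hΓpos hΓx hPDE J hJ
end
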